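/- arXiv:2406.13191 — 2 statements merged into one kernel-verified Lean document; each statement's English description precedes it below -/
import Mathlib

section
/- Weak duality for the QP dual with conic multiplier: if x satisfies ‖x‖_∞ ≤ 1, Ax − b = 0, and Cx − d ≤ 0, and M is a diagonal matrix with nonnegative entries, then for every λ, every μ ≥ 0, and every s ∈ ℝⁿ, −‖c + Aᵀλ + Cᵀμ − √M s‖₁ − (1/4) sᵀs − λᵀb − μᵀd ≤ xᵀMx + cᵀx. -/
open Matrix BigOperators

/-- Weak duality for the QP dual with conic multiplier `s`. -/
theorem stmt_5 (n m k : ℕ) (mvec : Fin n → ℝ) (hm : ∀ i, 0 ≤ mvec i)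
    (A : Matrix (Fin m) (Fin n) ℝ) (C : Matrix (Fin k) (Fin n) ℝ)
    (b : Fin m → ℝ) (d : Fin k → ℝ) (c : Fin n → ℝ)
    (x : Fin n → ℝ) (hx : ∀ i, |x i| ≤ 1)
    (heq : A.mulVec x = b) (hineq : ∀ j, (C.mulVec x) j ≤ d j)
    (lam : Fin m → ℝ) (mu : Fin k → ℝ) (hmu : ∀ j, 0 ≤ mu j) (s : Fin n → ℝ) :
    -(∑ i, |c i + (lam ᵥ* A) i + (mu ᵥ* C) i - Real.sqrt (mvec i) * s i|)
      - (1/4) * (∑ i, s i * s i) - lam ⬝ᵥ b - mu ⬝ᵥ d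
      ≤ x ⬝ᵥ (Matrix.diagonal mvec).mulVec x + c ⬝ᵥ x := by
  have h1 : lam ⬝ᵥ b = (lam ᵥ* A) ⬝ᵥ x := by
    rw [← heq, dotProduct_mulVec]
  have h2 : (mu ᵥ* C) ⬝ᵥ x ≤ mu ⬝ᵥ d := by
    rw [← dotProduct_mulVec]
    exact Finset.sum_le_sum fun j _ => mul_le_mul_of_nonneg_left (hineq j) (hmu j)
  have hdiag : x ⬝ᵥ (Matrix.diagonal mvec).mulVec x = ∑ i, x i * (mvec i * x i) := by
    simp [dotProduct, mulVec_diagonal]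
  have key : ∑ i, (-(|c i + (lam ᵥ* A) i + (mu ᵥ* C) i - Real.sqrt (mvec i) * s i|)
      - (1/4) * (s i * s i))
      ≤ ∑ i, (x i * (mvec i * x i) + c i * x i + (lam ᵥ* A) i * x i + (mu ᵥ* C) i * x i) := by
    apply Finset.sum_le_sum
    intro i _
    set a := Real.sqrt (mvec i) with ha
    have ha2 : a * a = mvec i := Real.mul_self_sqrt (hm i)
    set v := c i + (lam ᵥ* A) i + (mu ᵥ* C) i - a * s i with hv
    have hvx : -|v| ≤ v * x i := by
      have h3 : |v * x i| ≤ |v| := by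
        rw [abs_mul]
        calc |v| * |x i| ≤ |v| * 1 := by
              exact mul_le_mul_of_nonneg_left (hx i) (abs_nonneg v)
          _ = |v| := mul_one _
      linarith [neg_abs_le (v * x i)]
    have hvx2 : v * x i = c i * x i + (lam ᵥ* A) i * x i + (mu ᵥ* C) i * x i - a * s i * x i := by
      rw [hv]; ring
    have hsq : 0 ≤ a * a * (x i * x i) + a * s i * x i + s i * s i / 4 := by
      nlinarith [sq_nonneg (a * x i + s i / 2)]
    have hmm : x i * (mvec i * x i) = a * a * (x i * x i) := by rw [ha2]; ring
    linarith
  have expand : ∑ i, (x i * (mvec i * x i) + c i * x i + (lam ᵥ* A) i * x i + (mu ᵥ* C) i * x i)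
      = (∑ i, x i * (mvec i * x i)) + c ⬝ᵥ x + (lam ᵥ* A) ⬝ᵥ x + (mu ᵥ* C) ⬝ᵥ x := by
    simp [dotProduct, Finset.sum_add_distrib]
  rw [Finset.sum_sub_distrib, Finset.sum_neg_distrib, ← Finset.mul_sum] at key
  rw [hdiag]
  rw [expand] at key
  linarith
end

section
/- If the primal problem min{cᵀx + xᵀMx : Ax = b, Cx ≤ d, ‖x‖_∞ ≤ 1} with M diagonal nonnegative is feasible with optimal value p*, then sup over λ, μ ≥ 0, s of g_q(μ,λ,s) = −‖c + Aᵀλ + Cᵀμ − √M s‖₁ − (1/4)sᵀs − λᵀb − μᵀd is at most p*. -/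
open Matrix BigOperators

/-- Weak duality for the SOCP-based QP dual: the supremum of `g_q` over dual-feasible
variables is at most the primal optimal value. -/
theorem stmt_14 (n m k : ℕ) (mvec : Fin n → ℝ) (hm : ∀ i, 0 ≤ mvec i)
    (A : Matrix (Fin m) (Fin n) ℝ) (C : Matrix (Fin k) (Fin n) ℝ)
    (b : Fin m → ℝ) (d : Fin k → ℝ) (c : Fin n → ℝ)
    (hfeas : ∃ x : Fin n → ℝ, (∀ i, |x i| ≤ 1) ∧ A.mulVec x = b ∧ ∀ j, (C.mulVec x) j ≤ d j) :
    sSup {v : ℝ | ∃ (lam : Fin m → ℝ) (mu : Fin k → ℝ) (s : Fin n → ℝ),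
        (∀ j, 0 ≤ mu j) ∧
        v = -(∑ i, |c i + (lam ᵥ* A) i + (mu ᵥ* C) i - Real.sqrt (mvec i) * s i|)
            - (1/4) * (∑ i, s i * s i) - lam ⬝ᵥ b - mu ⬝ᵥ d}
    ≤ sInf {v : ℝ | ∃ x : Fin n → ℝ, (∀ i, |x i| ≤ 1) ∧ A.mulVec x = b ∧
        (∀ j, (C.mulVec x) j ≤ d j) ∧
        v = c ⬝ᵥ x + x ⬝ᵥ (Matrix.diagonal mvec).mulVec x} := by
  obtain ⟨x0, hx0, hAx0, hCx0⟩ := hfeas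
  have hSne : ∃ v, v ∈ {v : ℝ | ∃ (lam : Fin m → ℝ) (mu : Fin k → ℝ) (s : Fin n → ℝ),
        (∀ j, 0 ≤ mu j) ∧
        v = -(∑ i, |c i + (lam ᵥ* A) i + (mu ᵥ* C) i - Real.sqrt (mvec i) * s i|)
            - (1/4) * (∑ i, s i * s i) - lam ⬝ᵥ b - mu ⬝ᵥ d} := by
    refine ⟨_, 0, 0, 0, fun j => le_refl 0, rfl⟩
  have hTne : Set.Nonempty {v : ℝ | ∃ x : Fin n → ℝ, (∀ i, |x i| ≤ 1) ∧ A.mulVec x = b ∧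
      (∀ j, (C.mulVec x) j ≤ d j) ∧
      v = c ⬝ᵥ x + x ⬝ᵥ (Matrix.diagonal mvec).mulVec x} :=
    ⟨c ⬝ᵥ x0 + x0 ⬝ᵥ (Matrix.diagonal mvec).mulVec x0, x0, hx0, hAx0, hCx0, rfl⟩
  apply le_csInf hTne
  rintro t ⟨x, hx, hAx, hCx, rfl⟩
  apply csSup_le hSne
  rintro v ⟨lam, mu, s, hmu, rfl⟩
  have hlb : lam ⬝ᵥ b = ∑ i, (lam ᵥ* A) i * x i := by
    rw [← hAx, Matrix.dotProduct_mulVec]; rfl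
  have hmd : ∑ i, (mu ᵥ* C) i * x i ≤ mu ⬝ᵥ d := by
    have h1 : (mu ᵥ* C) ⬝ᵥ x = mu ⬝ᵥ C.mulVec x := (Matrix.dotProduct_mulVec mu C x).symm
    have h2 : mu ⬝ᵥ C.mulVec x ≤ mu ⬝ᵥ d :=
      Finset.sum_le_sum fun j _ => mul_le_mul_of_nonneg_left (hCx j) (hmu j)
    calc ∑ i, (mu ᵥ* C) i * x i = mu ⬝ᵥ C.mulVec x := h1
      _ ≤ mu ⬝ᵥ d := h2
  have hrhs : c ⬝ᵥ x + x ⬝ᵥ (Matrix.diagonal mvec).mulVec x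
      = ∑ i, (c i * x i + x i * (mvec i * x i)) := by
    simp [dotProduct, Matrix.mulVec_diagonal, ← Finset.sum_add_distrib]
  have this1 : ∑ i, (-(|c i + (lam ᵥ* A) i + (mu ᵥ* C) i - Real.sqrt (mvec i) * s i|)
      - (1/4) * (s i * s i) - (lam ᵥ* A) i * x i - (mu ᵥ* C) i * x i)
      ≤ ∑ i, (c i * x i + x i * (mvec i * x i)) := by
    apply Finset.sum_le_sum
    intro i _
    set q := Real.sqrt (mvec i) with hq
    set r := c i + (lam ᵥ* A) i + (mu ᵥ* C) i - q * s i with hr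
    have hqq : q * q = mvec i := Real.mul_self_sqrt (hm i)
    have h1 : -|r| ≤ r * x i := by
      nlinarith [neg_abs_le (r * x i), abs_mul r (x i), abs_nonneg r, hx i,
        abs_nonneg (x i), neg_abs_le (x i), le_abs_self (x i)]
    have h2 : r * x i = (c i + (lam ᵥ* A) i + (mu ᵥ* C) i) * x i - q * s i * x i := by
      rw [hr]; ring
    rw [← hqq]
    nlinarith [h1, h2, sq_nonneg (q * x i + s i / 2)]
  simp only [Finset.sum_sub_distrib, Finset.sum_neg_distrib, ← Finset.mul_sum] at this1
  rw [hrhs, hlb]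
  linarith [this1, hmd]
end
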